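/- Let d ≥ 1, let δ ∈ (0,1], let η, η' ∈ (0,1], and let u : ℝ^d → ℂ be measurable. Then, as an inequality of Lebesgue integrals valued in [0,∞], ∫_{ℝ^d} |f_δ(|u(x)|²)·u(x) − log(|u(x)|²)·u(x)|² dx ≤ (8/η²)·δ^η·∫_{ℝ^d} |u(x)|^{2−2η} dx + (8/η'²)·δ^{η'}·∫_{ℝ^d} |u(x)|^{2+2η'} dx. -/
import Mathlib

open MeasureTheory

/-- The regularized logarithmic nonlinearity `f_δ(r) = log((δ + r)/(1 + δ r))`. -/
noncomputable def fReg (δ r : ℝ) : ℝ := Real.log ((δ + r) / (1 + δ * r))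

lemma aux_log_le (x p : ℝ) (hx : 0 ≤ x) (hp : 0 < p) (hp1 : p ≤ 1) :
    Real.log (1 + x) ≤ x ^ p / p := by
  have h1x : (0:ℝ) < 1 + x := by linarith
  have hpow : (1 + x) ^ p ≤ 1 + x ^ p := by
    have h := NNReal.rpow_add_le_add_rpow 1 x.toNNReal hp.le hp1
    have h2 := NNReal.coe_le_coe.2 h
    push_cast [NNReal.coe_rpow, Real.coe_toNNReal x hx] at h2
    simpa using h2
  have hlog : Real.log ((1 + x) ^ p) ≤ (1 + x) ^ p - 1 :=
    Real.log_le_sub_one_of_pos (Real.rpow_pos_of_pos h1x p)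
  rw [Real.log_rpow h1x] at hlog
  rw [le_div_iff₀ hp]
  nlinarith

lemma key_pt (δ η η' r : ℝ) (hδ0 : 0 < δ) (hδ1 : δ ≤ 1) (hη0 : 0 < η) (hη1 : η ≤ 1)
    (hη'0 : 0 < η') (hη'1 : η' ≤ 1) (hr : 0 < r) :
    (fReg δ r - Real.log r) ^ 2 * r ≤
      8 / η ^ 2 * δ ^ η * r ^ (1 - η) + 8 / η' ^ 2 * δ ^ η' * r ^ (1 + η') := by
  set a := Real.log (1 + δ / r) with ha_def
  set b := Real.log (1 + δ * r) with hb_def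
  have hδr : (0:ℝ) < δ + r := by positivity
  have h1δr : (0:ℝ) < 1 + δ * r := by positivity
  have hdr0 : (0:ℝ) ≤ δ / r := by positivity
  have hfe : fReg δ r - Real.log r = a - b := by
    have hδpr : Real.log (δ + r) = Real.log r + a := by
      rw [ha_def, ← Real.log_mul hr.ne' (by positivity : (1:ℝ) + δ / r ≠ 0)]
      congr 1
      field_simp
      ring
    unfold fReg
    rw [Real.log_div hδr.ne' h1δr.ne', hδpr]
    ring
  have ha0 : 0 ≤ a := Real.log_nonneg (by linarith)
  have hb0 : 0 ≤ b := Real.log_nonneg (by nlinarith)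
  have ha : a ≤ 2 / η * (δ / r) ^ (η / 2) := by
    have h := aux_log_le (δ / r) (η / 2) hdr0 (by positivity) (by linarith)
    calc a ≤ (δ / r) ^ (η / 2) / (η / 2) := h
      _ = 2 / η * (δ / r) ^ (η / 2) := by field_simp
  have hb : b ≤ 2 / η' * (δ * r) ^ (η' / 2) := by
    have h := aux_log_le (δ * r) (η' / 2) (by positivity) (by positivity) (by linarith)
    calc b ≤ (δ * r) ^ (η' / 2) / (η' / 2) := h
      _ = 2 / η' * (δ * r) ^ (η' / 2) := by field_simp
  have hsqa : ((δ / r) ^ (η / 2)) ^ 2 = (δ / r) ^ η := by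
    rw [← Real.rpow_natCast ((δ / r) ^ (η / 2)) 2, ← Real.rpow_mul hdr0]
    norm_num
  have hsqb : ((δ * r) ^ (η' / 2)) ^ 2 = (δ * r) ^ η' := by
    rw [← Real.rpow_natCast ((δ * r) ^ (η' / 2)) 2,
      ← Real.rpow_mul (by positivity : (0:ℝ) ≤ δ * r)]
    norm_num
  have hdra : (δ / r) ^ η * r = δ ^ η * r ^ (1 - η) := by
    rw [Real.div_rpow hδ0.le hr.le, Real.rpow_sub hr, Real.rpow_one]
    field_simp
  have hdrb : (δ * r) ^ η' * r = δ ^ η' * r ^ (1 + η') := by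
    rw [Real.mul_rpow hδ0.le hr.le, Real.rpow_add hr, Real.rpow_one]
    ring
  have ha2 : a ^ 2 * r ≤ 4 / η ^ 2 * δ ^ η * r ^ (1 - η) := by
    calc a ^ 2 * r ≤ (2 / η * (δ / r) ^ (η / 2)) ^ 2 * r := by
          have := pow_le_pow_left₀ ha0 ha 2
          exact mul_le_mul_of_nonneg_right this hr.le
      _ = 4 / η ^ 2 * (((δ / r) ^ (η / 2)) ^ 2 * r) := by ring
      _ = 4 / η ^ 2 * ((δ / r) ^ η * r) := by rw [hsqa]
      _ = 4 / η ^ 2 * δ ^ η * r ^ (1 - η) := by rw [hdra]; ring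
  have hb2 : b ^ 2 * r ≤ 4 / η' ^ 2 * δ ^ η' * r ^ (1 + η') := by
    calc b ^ 2 * r ≤ (2 / η' * (δ * r) ^ (η' / 2)) ^ 2 * r := by
          have := pow_le_pow_left₀ hb0 hb 2
          exact mul_le_mul_of_nonneg_right this hr.le
      _ = 4 / η' ^ 2 * (((δ * r) ^ (η' / 2)) ^ 2 * r) := by ring
      _ = 4 / η' ^ 2 * ((δ * r) ^ η' * r) := by rw [hsqb]
      _ = 4 / η' ^ 2 * δ ^ η' * r ^ (1 + η') := by rw [hdrb]; ring
  have hab : (a - b) ^ 2 * r ≤ 2 * (a ^ 2 * r) + 2 * (b ^ 2 * r) := by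
    nlinarith [sq_nonneg (a + b), hr.le]
  have e1 : 8 / η ^ 2 * δ ^ η * r ^ (1 - η) = 2 * (4 / η ^ 2 * δ ^ η * r ^ (1 - η)) := by ring
  have e2 : 8 / η' ^ 2 * δ ^ η' * r ^ (1 + η') = 2 * (4 / η' ^ 2 * δ ^ η' * r ^ (1 + η')) := by
    ring
  rw [hfe, e1, e2]
  linarith

lemma pt_bound (δ η η' : ℝ) (hδ0 : 0 < δ) (hδ1 : δ ≤ 1) (hη0 : 0 < η) (hη1 : η ≤ 1)
    (hη'0 : 0 < η') (hη'1 : η' ≤ 1) (z : ℂ) :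
    ENNReal.ofReal (‖(fReg δ (‖z‖ ^ 2) : ℂ) * z - (Real.log (‖z‖ ^ 2) : ℂ) * z‖ ^ 2) ≤
      ENNReal.ofReal (8 / η ^ 2 * δ ^ η * ‖z‖ ^ (2 - 2 * η)) +
        ENNReal.ofReal (8 / η' ^ 2 * δ ^ η' * ‖z‖ ^ (2 + 2 * η')) := by
  rcases eq_or_ne z 0 with rfl | hz
  · simp
  · have hz0 : (0:ℝ) < ‖z‖ := norm_pos_iff.2 hz
    have hr : (0:ℝ) < ‖z‖ ^ 2 := by positivity
    have hnorm : ‖(fReg δ (‖z‖ ^ 2) : ℂ) * z - (Real.log (‖z‖ ^ 2) : ℂ) * z‖ ^ 2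
        = (fReg δ (‖z‖ ^ 2) - Real.log (‖z‖ ^ 2)) ^ 2 * ‖z‖ ^ 2 := by
      rw [← sub_mul, ← Complex.ofReal_sub, norm_mul, Complex.norm_real, Real.norm_eq_abs,
        mul_pow, sq_abs]
    have h1 : ((‖z‖ ^ 2 : ℝ)) ^ (1 - η) = ‖z‖ ^ (2 - 2 * η) := by
      rw [← Real.rpow_natCast ‖z‖ 2, ← Real.rpow_mul (norm_nonneg z)]
      norm_num
      ring_nf
    have h2 : ((‖z‖ ^ 2 : ℝ)) ^ (1 + η') = ‖z‖ ^ (2 + 2 * η') := by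
      rw [← Real.rpow_natCast ‖z‖ 2, ← Real.rpow_mul (norm_nonneg z)]
      norm_num
      ring_nf
    have hkey := key_pt δ η η' (‖z‖ ^ 2) hδ0 hδ1 hη0 hη1 hη'0 hη'1 hr
    rw [h1, h2] at hkey
    rw [hnorm]
    exact le_trans (ENNReal.ofReal_le_ofReal hkey) ENNReal.ofReal_add_le

/-- `L²` regularization-error bound: for measurable `u : ℝ^d → ℂ` and
`δ, η, η' ∈ (0,1]`,
`∫ |f_δ(|u|²) u − log(|u|²) u|² ≤ (8/η²) δ^η ∫ |u|^{2−2η} + (8/η'²) δ^{η'} ∫ |u|^{2+2η'}`,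
as an inequality of Lebesgue integrals valued in `[0,∞]`. -/
theorem regularized_log_error_L2 (d : ℕ) (hd : 1 ≤ d) (δ η η' : ℝ)
    (hδ : δ ∈ Set.Ioc (0 : ℝ) 1) (hη : η ∈ Set.Ioc (0 : ℝ) 1)
    (hη' : η' ∈ Set.Ioc (0 : ℝ) 1)
    (u : EuclideanSpace ℝ (Fin d) → ℂ) (hu : Measurable u) :
    (∫⁻ x, ENNReal.ofReal
        (‖(fReg δ (‖u x‖ ^ 2) : ℂ) * u x - (Real.log (‖u x‖ ^ 2) : ℂ) * u x‖ ^ 2)) ≤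
      ENNReal.ofReal (8 / η ^ 2 * δ ^ η) *
          (∫⁻ x, ENNReal.ofReal (‖u x‖ ^ (2 - 2 * η))) +
        ENNReal.ofReal (8 / η' ^ 2 * δ ^ η') *
          (∫⁻ x, ENNReal.ofReal (‖u x‖ ^ (2 + 2 * η'))) := by
  obtain ⟨hδ0, hδ1⟩ := hδ
  obtain ⟨hη0, hη1⟩ := hη
  obtain ⟨hη'0, hη'1⟩ := hη'
  have hc1 : (0:ℝ) ≤ 8 / η ^ 2 * δ ^ η := by positivity
  have hc2 : (0:ℝ) ≤ 8 / η' ^ 2 * δ ^ η' := by positivity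
  have mg1 : Measurable fun x => ENNReal.ofReal (‖u x‖ ^ (2 - 2 * η)) :=
    (hu.norm.pow measurable_const).ennreal_ofReal
  have mg2 : Measurable fun x => ENNReal.ofReal (‖u x‖ ^ (2 + 2 * η')) :=
    (hu.norm.pow measurable_const).ennreal_ofReal
  calc (∫⁻ x, ENNReal.ofReal
        (‖(fReg δ (‖u x‖ ^ 2) : ℂ) * u x - (Real.log (‖u x‖ ^ 2) : ℂ) * u x‖ ^ 2))
      ≤ ∫⁻ x, (ENNReal.ofReal (8 / η ^ 2 * δ ^ η * ‖u x‖ ^ (2 - 2 * η)) +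
          ENNReal.ofReal (8 / η' ^ 2 * δ ^ η' * ‖u x‖ ^ (2 + 2 * η'))) :=
        lintegral_mono fun x => pt_bound δ η η' hδ0 hδ1 hη0 hη1 hη'0 hη'1 (u x)
    _ = ∫⁻ x, (ENNReal.ofReal (8 / η ^ 2 * δ ^ η) * ENNReal.ofReal (‖u x‖ ^ (2 - 2 * η)) +
          ENNReal.ofReal (8 / η' ^ 2 * δ ^ η') * ENNReal.ofReal (‖u x‖ ^ (2 + 2 * η'))) := by
        simp_rw [← ENNReal.ofReal_mul hc1, ← ENNReal.ofReal_mul hc2]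
    _ = (∫⁻ x, ENNReal.ofReal (8 / η ^ 2 * δ ^ η) * ENNReal.ofReal (‖u x‖ ^ (2 - 2 * η))) +
          ∫⁻ x, ENNReal.ofReal (8 / η' ^ 2 * δ ^ η') * ENNReal.ofReal (‖u x‖ ^ (2 + 2 * η')) :=
        lintegral_add_left (mg1.const_mul _) _
    _ = ENNReal.ofReal (8 / η ^ 2 * δ ^ η) *
          (∫⁻ x, ENNReal.ofReal (‖u x‖ ^ (2 - 2 * η))) +
        ENNReal.ofReal (8 / η' ^ 2 * δ ^ η') *
          (∫⁻ x, ENNReal.ofReal (‖u x‖ ^ (2 + 2 * η'))) := by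
        rw [lintegral_const_mul _ mg1, lintegral_const_mul _ mg2]
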